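/- Let $n \geq 2$, let $A \in \mathbb{R}^{n\times n}$ be symmetric with zero diagonal and all off-diagonal entries equal to values $A_{ij} = g(w_{ij})$ where $g$ is a nonnegative increasing convex function on an interval containing all $w_{ij}$. Let $y \in \mathbb{R}^n$ with $\langle y, \mathbbm{1}_n \rangle = 0$ and $\|y\| = 1$, and suppose $\widetilde{W}$ satisfies $-\sum_{i \neq j} y_i y_j \max\{w_{ij} - w, 0\} \leq \max\{\widetilde{W} - w, 0\}$ for all $w \in \{w_{ij}\} \cup \{\widetilde{W}\}$. Then $-\langle y, A y\rangle \leq g(\widetilde{W})$. -/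

import Mathlib

/-!
Put `pᵢⱼ = -yᵢyⱼ` for `i ≠ j` and `pᵢᵢ = 0`; since `y ⊥ 𝟙` and `‖y‖ = 1` these signed weights sum
to `1`, and `-⟨y, A y⟩ = ∑ pᵢⱼ g(wᵢⱼ)`. On the finite set `T` of the values `wᵢⱼ` and `W̃`, an
increasing convex `g` agrees with a hinge combination `a + ∑_{t ∈ T} cₜ (x - t)⁺` with all
`cₜ ≥ 0` (the kinks are the jumps of the secant slopes, and the first slope is `≥ 0`). The
hypothesis bounds every hinge term, so by linearity `∑ pᵢⱼ g(wᵢⱼ) ≤ a + ∑ cₜ (W̃ - t)⁺ = g(W̃)`.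
-/

open Matrix Finset

def hinge (T : Finset ℝ) (a : ℝ) (c : ℝ → ℝ) (x : ℝ) : ℝ :=
  a + ∑ t ∈ T, c t * max (x - t) 0

lemma hinge_eq_of_forall_le {T : Finset ℝ} {a x : ℝ} (c : ℝ → ℝ) (hx : ∀ t ∈ T, t ≤ x) :
    hinge T a c x = a + ∑ t ∈ T, c t * (x - t) := by
  unfold hinge
  congr 1
  exact sum_congr rfl fun t ht => by rw [max_eq_left (sub_nonneg.2 (hx t ht))]

lemma hinge_eq_add_mul_sub {T : Finset ℝ} {a x M : ℝ} (c : ℝ → ℝ) (hM : ∀ t ∈ T, t ≤ M)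
    (hMx : M ≤ x) : hinge T a c x = hinge T a c M + (∑ t ∈ T, c t) * (x - M) := by
  rw [hinge_eq_of_forall_le c hM, hinge_eq_of_forall_le c fun t ht => (hM t ht).trans hMx,
    sum_mul, add_assoc, ← sum_add_distrib]
  congr 1
  exact sum_congr rfl fun t _ => by ring

lemma hinge_insert_bump {T : Finset ℝ} {M M' : ℝ} (hM : M ∉ T) (hM' : M' ∈ T)
    (a δ : ℝ) (c : ℝ → ℝ) (x : ℝ) :
    hinge (insert M T) a (fun t => if t = M then 0 else c t + if t = M' then δ else 0) x =
      hinge T a c x + δ * max (x - M') 0 := by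
  have hcoeff : ∀ t ∈ T, (if t = M then 0 else c t + if t = M' then δ else 0) * max (x - t) 0 =
      c t * max (x - t) 0 + if t = M' then δ * max (x - M') 0 else 0 := by
    intro t ht
    rw [if_neg (ne_of_mem_of_not_mem ht hM)]
    split_ifs with h <;> simp [h, add_mul]
  simp only [hinge, sum_insert hM, ↓reduceIte, zero_mul, zero_add, sum_congr rfl hcoeff,
    sum_add_distrib, sum_ite_eq', if_pos hM', add_assoc]

/-- The bound to the right of `T` is what keeps the new kink nonnegative when a knot is added
above `T`. -/
structure IsHingeMinorant (g : ℝ → ℝ) (s : Set ℝ) (T : Finset ℝ) (a : ℝ) (c : ℝ → ℝ) : Prop where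
  nonneg : ∀ t ∈ T, 0 ≤ c t
  eq_on : ∀ x ∈ T, hinge T a c x = g x
  le_of_forall_le : ∀ x ∈ s, (∀ t ∈ T, t ≤ x) → hinge T a c x ≤ g x

section HingeMinorant

variable {g : ℝ → ℝ} {s : Set ℝ}

lemma isHingeMinorant_singleton (hg : MonotoneOn g s) {M : ℝ} (hM : M ∈ s) :
    IsHingeMinorant g s {M} (g M) 0 where
  nonneg := by simp
  eq_on := by simp [hinge]
  le_of_forall_le x hx hMx := by simpa [hinge] using hg hM hx (hMx M (mem_singleton_self M))

/-- The new kink sits at the old maximum `M'` and has size `σ - S ≥ 0`: the slope `σ` of the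
secant from `M'` to `M` minus the slope `S = ∑ c` of the minorant to the right of `T`. -/
lemma IsHingeMinorant.insert_of_lt (hg : ConvexOn ℝ s g) {T : Finset ℝ} {a : ℝ} {c : ℝ → ℝ}
    (h : IsHingeMinorant g s T a c) {M' : ℝ} (hM'T : M' ∈ T) (hM's : M' ∈ s)
    (hle : ∀ t ∈ T, t ≤ M') {M : ℝ} (hMs : M ∈ s) (hM'M : M' < M) :
    ∃ c', IsHingeMinorant g s (insert M T) a c' := by
  have hMT : M ∉ T := fun hM => (hle M hM).not_gt hM'M
  set S := ∑ t ∈ T, c t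
  have hlin : ∀ x, M' ≤ x → hinge T a c x = g M' + S * (x - M') := fun x hx => by
    rw [hinge_eq_add_mul_sub c hle hx, h.eq_on M' hM'T]
  set σ := (g M - g M') / (M - M')
  have hpos : 0 < M - M' := sub_pos.2 hM'M
  have hSσ : S ≤ σ := by
    rw [le_div_iff₀ hpos]
    have hbelow := h.le_of_forall_le M hMs fun t ht => (hle t ht).trans hM'M.le
    linarith [hlin M hM'M.le]
  set c' : ℝ → ℝ := fun t => if t = M then 0 else c t + if t = M' then σ - S else 0
  have hnew : ∀ x, M' ≤ x → hinge (insert M T) a c' x = g M' + σ * (x - M') := fun x hx => by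
    rw [hinge_insert_bump hMT hM'T, hlin x hx, max_eq_left (sub_nonneg.2 hx)]
    ring
  refine ⟨c', ?_, ?_, ?_⟩
  · intro t ht
    simp only [c']
    split_ifs with htM
    · exact le_rfl
    all_goals linarith [h.nonneg t (mem_of_mem_insert_of_ne ht htM)]
  · intro x hx
    rcases mem_insert.1 hx with rfl | hxT
    · rw [hnew x hM'M.le, div_mul_cancel₀ _ hpos.ne']
      ring
    · rw [hinge_insert_bump hMT hM'T, max_eq_right (sub_nonpos.2 (hle x hxT)), mul_zero,
        add_zero, h.eq_on x hxT]
  · intro x hx hTx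
    have hMx := hTx M (mem_insert_self M T)
    have hM'x : M' < x := hM'M.trans_le hMx
    rw [hnew x hM'x.le, ← le_sub_iff_add_le', ← le_div_iff₀ (sub_pos.2 hM'x)]
    exact hg.secant_mono hM's hMs hx hM'M.ne' hM'x.ne' hMx

lemma exists_isHingeMinorant (hgm : MonotoneOn g s) (hgc : ConvexOn ℝ s g) {T : Finset ℝ}
    (hT : T.Nonempty) (hTs : ↑T ⊆ s) : ∃ a c, IsHingeMinorant g s T a c := by
  induction T using Finset.induction_on_max with
  | empty => exact absurd hT not_nonempty_empty
  | insert M T hlt ih =>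
    have hMs : M ∈ s := hTs (mem_insert_self M T)
    rcases T.eq_empty_or_nonempty with rfl | hne
    · exact ⟨g M, 0, isHingeMinorant_singleton hgm hMs⟩
    obtain ⟨a, c, h⟩ := ih hne fun t ht => hTs (mem_insert_of_mem ht)
    have hmax := max'_mem T hne
    exact ⟨a, h.insert_of_lt hgc hmax (hTs (mem_insert_of_mem hmax)) (fun t ht => le_max' T t ht)
      hMs (hlt _ hmax)⟩

end HingeMinorant

lemma sum_mul_hinge_le {κ : Type*} [Fintype κ] (p v : κ → ℝ) (hp : ∑ k, p k = 1)
    {T : Finset ℝ} {a : ℝ} {c : ℝ → ℝ} (hc : ∀ t ∈ T, 0 ≤ c t) {W : ℝ}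
    (hW : ∀ t ∈ T, ∑ k, p k * max (v k - t) 0 ≤ max (W - t) 0) :
    ∑ k, p k * hinge T a c (v k) ≤ hinge T a c W := by
  have hexpand : ∑ k, p k * hinge T a c (v k) =
      a + ∑ t ∈ T, c t * ∑ k, p k * max (v k - t) 0 := by
    simp only [hinge, mul_add, sum_add_distrib, ← sum_mul, hp, one_mul, mul_sum, sum_comm (s := T)]
    congr 1
    exact sum_congr rfl fun t _ => sum_congr rfl fun k _ => by ring
  rw [hexpand, hinge]
  gcongr with t ht
  exacts [hc t ht, hW t ht]

section OffDiagonal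

variable {ι : Type*} [Fintype ι] [DecidableEq ι]

def offDiagWeight (y : ι → ℝ) (k : ι × ι) : ℝ :=
  if k.1 = k.2 then 0 else -(y k.1 * y k.2)

lemma sum_offDiagWeight (y : ι → ℝ) :
    ∑ k, offDiagWeight y k = ∑ i, y i ^ 2 - (∑ i, y i) ^ 2 := by
  have hsplit : ∀ k : ι × ι, offDiagWeight y k =
      (if k.1 = k.2 then y k.1 * y k.2 else 0) - y k.1 * y k.2 := fun k => by
    unfold offDiagWeight; split_ifs <;> ring
  simp only [hsplit, sum_sub_distrib, Fintype.sum_prod_type, sum_ite_eq, mem_univ, if_true, sq,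
    sum_mul_sum]

lemma sum_offDiagWeight_mul (y : ι → ℝ) (f : ι → ι → ℝ) :
    ∑ k, offDiagWeight y k * f k.1 k.2 = -∑ i, ∑ j, if i = j then 0 else y i * y j * f i j := by
  simp only [Fintype.sum_prod_type, ← sum_neg_distrib]
  refine sum_congr rfl fun i _ => sum_congr rfl fun j _ => ?_
  unfold offDiagWeight
  split_ifs <;> simp

lemma neg_dotProduct_mulVec_eq_sum_offDiagWeight {A : Matrix ι ι ℝ} (hA : ∀ i, A i i = 0)
    (y : ι → ℝ) : -(y ⬝ᵥ A *ᵥ y) = ∑ k, offDiagWeight y k * A k.1 k.2 := by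
  rw [sum_offDiagWeight_mul y fun i j => A i j, neg_inj]
  simp only [dotProduct, mulVec, mul_sum]
  refine sum_congr rfl fun i _ => sum_congr rfl fun j _ => ?_
  split_ifs with hij
  · simp [hij, hA]
  · ring

end OffDiagonal

theorem transfer_principle_general (n : ℕ)
    (A : Matrix (Fin n) (Fin n) ℝ)
    (w : Fin n → Fin n → ℝ) (g : ℝ → ℝ) (s : Set ℝ)
    (hgmono : MonotoneOn g s) (hgconv : ConvexOn ℝ s g)
    (hdiag : ∀ i, A i i = 0)
    (hoff : ∀ i j, i ≠ j → A i j = g (w i j))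
    (hws : ∀ i j, i ≠ j → w i j ∈ s)
    (y : Fin n → ℝ) (hy1 : ∑ i, y i = 0) (hy2 : ∑ i, y i ^ 2 = 1)
    (W : ℝ) (hWs : W ∈ s)
    (hW : ∀ w₀ : ℝ, ((∃ i j, i ≠ j ∧ w₀ = w i j) ∨ w₀ = W) →
      -(∑ i, ∑ j, if i = j then 0 else y i * y j * max (w i j - w₀) 0) ≤
        max (W - w₀) 0) :
    -(y ⬝ᵥ A.mulVec y) ≤ g W := by
  set T : Finset ℝ := insert W ((univ.filter fun k : Fin n × Fin n => k.1 ≠ k.2).image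
    fun k => w k.1 k.2)
  have hT : ∀ t, t ∈ T ↔ (∃ i j, i ≠ j ∧ t = w i j) ∨ t = W := fun t => by
    simp [T, or_comm, eq_comm]
  have hTs : ↑T ⊆ s := fun t ht => by
    rcases (hT t).1 ht with ⟨i, j, hij, rfl⟩ | rfl
    exacts [hws i j hij, hWs]
  obtain ⟨a, c, h⟩ := exists_isHingeMinorant hgmono hgconv (insert_nonempty _ _) hTs
  have hp : ∑ k, offDiagWeight y k = 1 := by rw [sum_offDiagWeight, hy1, hy2]; norm_num
  have hWT : ∀ t ∈ T, ∑ k, offDiagWeight y k * max (w k.1 k.2 - t) 0 ≤ max (W - t) 0 :=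
    fun t ht => by
      rw [sum_offDiagWeight_mul y fun i j => max (w i j - t) 0]
      exact hW t ((hT t).1 ht)
  calc -(y ⬝ᵥ A.mulVec y) = ∑ k, offDiagWeight y k * hinge T a c (w k.1 k.2) := by
        rw [neg_dotProduct_mulVec_eq_sum_offDiagWeight hdiag]
        refine sum_congr rfl fun ⟨i, j⟩ _ => ?_
        by_cases hij : i = j
        · simp [offDiagWeight, hij]
        · rw [hoff i j hij, h.eq_on _ ((hT _).2 (.inl ⟨i, j, hij, rfl⟩))]
    _ ≤ hinge T a c W := sum_mul_hinge_le _ _ hp h.nonneg hWT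
    _ = g W := h.eq_on W (mem_insert_self _ _)

/-- Majorization-type transfer principle (Horváth 2023, Theorem 9(a₂) special case):
if `A` is symmetric with zero diagonal and off-diagonal entries `A i j = g (w i j)`
for a nonnegative increasing convex `g` on an interval `s` containing all `w i j`
and `W̃`, and `y ⊥ 𝟙` is a unit vector such that
`-∑_{i≠j} yᵢ yⱼ max(wᵢⱼ - w₀, 0) ≤ max(W̃ - w₀, 0)` for every `w₀` among the `wᵢⱼ`
and `W̃`, then `-⟨y, A y⟩ ≤ g(W̃)`. -/
theorem transfer_principle (n : ℕ) (hn : 2 ≤ n)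
    (A : Matrix (Fin n) (Fin n) ℝ) (hA : A.IsSymm)
    (w : Fin n → Fin n → ℝ) (g : ℝ → ℝ) (s : Set ℝ)
    (hs : s.OrdConnected)
    (hgnn : ∀ x ∈ s, 0 ≤ g x) (hgmono : MonotoneOn g s) (hgconv : ConvexOn ℝ s g)
    (hdiag : ∀ i, A i i = 0)
    (hoff : ∀ i j, i ≠ j → A i j = g (w i j))
    (hws : ∀ i j, i ≠ j → w i j ∈ s)
    (y : Fin n → ℝ) (hy1 : ∑ i, y i = 0) (hy2 : ∑ i, y i ^ 2 = 1)
    (W : ℝ) (hWs : W ∈ s)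
    (hW : ∀ w₀ : ℝ, ((∃ i j, i ≠ j ∧ w₀ = w i j) ∨ w₀ = W) →
      -(∑ i, ∑ j, if i = j then 0 else y i * y j * max (w i j - w₀) 0) ≤
        max (W - w₀) 0) :
    -(y ⬝ᵥ A.mulVec y) ≤ g W :=
  transfer_principle_general n A w g s hgmono hgconv hdiag hoff hws y hy1 hy2 W hWs hW
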